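/- Every multiplicative linear functional h on the Banach algebra (L¹(ℝ), ⋆_A) is of the form h(f) = η̄_A(ω₀) 𝓕_A(f)(ω₀) for some ω₀ ∈ ℝ, where η_A(ω) = e^{(πi/b)(dω² + 2(bq−dp)ω)}. -/

import Mathlib

/-!
Conjugating by the chirp `e^{πi a x²/b}` reduces `⋆_A` to ordinary convolution:
`e^{-πi a x²/b} (φ ⋆ ψ) = √|b| · (e^{-πi a s²/b} φ) ⋆_A (e^{-πi a s²/b} ψ)`, so
`f ↦ √|b| h(e^{-πi a x²/b} f)` is a nonzero continuous character `K` of `(L¹(ℝ), ⋆)`.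
Writing `f ⋆ u` as the `L¹`-valued integral `∫ f(t) τ_t u dt` gives
`K f · K u = ∫ f(t) K(τ_t u) dt`, and `χ(t) = K(τ_t u) / K u` is a bounded continuous solution
of `χ(s + t) = χ(s) χ(t)`. Being a difference quotient of its own primitive, `χ` is
differentiable with `χ' = χ'(0) χ`, so `χ(t) = e^{iθt}`. Undoing the chirp,
`∫ f(t) e^{πi a t²/b} e^{iθt} dt = √|b| conj(η_A(ω₀)) 𝓕_A f(ω₀)` with `ω₀ = p - θb/(2π)`.
-/

open MeasureTheory Complex

noncomputable def SAFT (a b d p q : ℝ) (f : ℝ → ℂ) (ω : ℝ) : ℂ :=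
  (1 / Real.sqrt |b|) *
    ∫ t : ℝ, f t *
      Complex.exp ((Real.pi * Complex.I / b) *
        (a * t ^ 2 + 2 * p * t - 2 * ω * t + 2 * (b * q - d * p) * ω + d * ω ^ 2))

noncomputable def etaA (b d p q : ℝ) (ω : ℝ) : ℂ :=
  Complex.exp ((Real.pi * Complex.I / b) * (d * ω ^ 2 + 2 * (b * q - d * p) * ω))

noncomputable def convA (a b : ℝ) (f g : ℝ → ℂ) (x : ℝ) : ℂ :=
  (1 / Real.sqrt |b|) *
    ∫ s : ℝ, f s *
      (Complex.exp (-2 * Real.pi * Complex.I * (a / b) * s * (x - s)) * g (x - s))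

local notation:67 f " ⋆ " g:66 => convolution f g (ContinuousLinearMap.mul ℂ ℂ) volume

section IntegrableFunctional

variable {α : Type*} [MeasurableSpace α] {μ : Measure α} {h : (α → ℂ) → ℂ} {C : ℝ}

theorem map_eq_of_ae_eq
    (hadd : ∀ f g : α → ℂ, Integrable f μ → Integrable g μ → h (f + g) = h f + h g)
    (hC : ∀ f : α → ℂ, Integrable f μ → ‖h f‖ ≤ C * (eLpNorm f 1 μ).toReal)
    {f g : α → ℂ} (hf : Integrable f μ) (hg : Integrable g μ) (hfg : f =ᵐ[μ] g) :
    h f = h g := by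
  have hnull : h (f - g) = 0 := by
    simpa [eLpNorm_congr_ae hfg.sub_eq] using hC (f - g) (hf.sub hg)
  calc h f = h (g + (f - g)) := by rw [add_sub_cancel]
    _ = h g := by rw [hadd g (f - g) hg (hf.sub hg), hnull, add_zero]

theorem exists_continuousLinearMap_L1_eq
    (hadd : ∀ f g : α → ℂ, Integrable f μ → Integrable g μ → h (f + g) = h f + h g)
    (hsmul : ∀ (z : ℂ) (f : α → ℂ), Integrable f μ → h (z • f) = z * h f)
    (hC : ∀ f : α → ℂ, Integrable f μ → ‖h f‖ ≤ C * (eLpNorm f 1 μ).toReal) :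
    ∃ K : (α →₁[μ] ℂ) →L[ℂ] ℂ, ∀ (f : α → ℂ) (hf : Integrable f μ), K (hf.toL1 f) = h f := by
  have hL1 (F : α →₁[μ] ℂ) : Integrable F μ := L1.integrable_coeFn F
  let K : (α →₁[μ] ℂ) →ₗ[ℂ] ℂ :=
    { toFun := fun F => h F
      map_add' := fun F G => by
        rw [map_eq_of_ae_eq hadd hC (hL1 _) ((hL1 F).add (hL1 G)) (Lp.coeFn_add F G)]
        exact hadd _ _ (hL1 F) (hL1 G)
      map_smul' := fun z F => by
        rw [map_eq_of_ae_eq hadd hC (hL1 _) ((hL1 F).smul z) (Lp.coeFn_smul z F)]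
        exact hsmul z _ (hL1 F) }
  refine ⟨K.mkContinuous C fun F => ?_, fun f hf => ?_⟩
  · rw [Lp.norm_def]
    exact hC F (hL1 F)
  · exact map_eq_of_ae_eq hadd hC (hL1 _) hf hf.coeFn_toL1

theorem MeasureTheory.Integrable.mul_of_norm_eq_one {u f : α → ℂ} (hu : AEStronglyMeasurable u μ)
    (hu1 : ∀ x, ‖u x‖ = 1) (hf : Integrable f μ) : Integrable (fun x => u x * f x) μ :=
  hf.congr' (hu.mul hf.aestronglyMeasurable) (ae_of_all _ fun x => by simp [hu1])

theorem exists_continuousLinearMap_L1_eq_mul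
    (hadd : ∀ f g : α → ℂ, Integrable f μ → Integrable g μ → h (f + g) = h f + h g)
    (hsmul : ∀ (z : ℂ) (f : α → ℂ), Integrable f μ → h (z • f) = z * h f)
    (hC : ∀ f : α → ℂ, Integrable f μ → ‖h f‖ ≤ C * (eLpNorm f 1 μ).toReal)
    {u : α → ℂ} (hu : AEStronglyMeasurable u μ) (hu1 : ∀ x, ‖u x‖ = 1) :
    ∃ K : (α →₁[μ] ℂ) →L[ℂ] ℂ,
      ∀ (f : α → ℂ) (hf : Integrable f μ), K (hf.toL1 f) = h (fun x => u x * f x) := by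
  have hint {f : α → ℂ} (hf : Integrable f μ) := hf.mul_of_norm_eq_one hu hu1
  refine exists_continuousLinearMap_L1_eq (C := C) (fun f g hf hg => ?_) (fun z f hf => ?_)
    (fun f hf => ?_)
  · rw [← hadd _ _ (hint hf) (hint hg)]
    congr 1
    ext x
    simp [mul_add]
  · rw [← hsmul z _ (hint hf)]
    congr 1
    ext x
    simp [mul_left_comm]
  · have hnorm : eLpNorm (fun x => u x * f x) 1 μ = eLpNorm f 1 μ :=
      eLpNorm_congr_norm_ae (ae_of_all _ fun x => by simp [hu1])
    simpa only [hnorm] using hC _ (hint hf)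

end IntegrableFunctional

section Translation

variable {E : Type*} [NormedAddCommGroup E]

noncomputable def translateL1 (t : ℝ) (F : ℝ →₁[volume] E) : ℝ →₁[volume] E :=
  Lp.compMeasurePreserving (· - t) (measurePreserving_sub_right volume t) F

theorem translateL1_toL1 {g : ℝ → E} (hg : Integrable g) (t : ℝ) :
    translateL1 t (hg.toL1 g) = (hg.comp_sub_right t).toL1 (fun x => g (x - t)) :=
  rfl

@[simp]
theorem norm_translateL1 (t : ℝ) (F : ℝ →₁[volume] E) : ‖translateL1 t F‖ = ‖F‖ :=
  Lp.norm_compMeasurePreserving _ _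

theorem translateL1_zero (F : ℝ →₁[volume] E) : translateL1 0 F = F := by
  simp only [translateL1, sub_zero]
  exact Lp.compMeasurePreserving_id_apply F

theorem translateL1_translateL1 (s t : ℝ) (F : ℝ →₁[volume] E) :
    translateL1 t (translateL1 s F) = translateL1 (s + t) F := by
  rw [translateL1, translateL1, ← Lp.compMeasurePreserving_comp_apply]
  congr 2
  funext x
  simp only [Function.comp_apply]
  ring

theorem continuous_translateL1 (F : ℝ →₁[volume] E) : Continuous fun t => translateL1 t F :=
  continuous_const.compMeasurePreservingLp
    (g := fun t => (⟨fun x => x - t, by fun_prop⟩ : C(ℝ, ℝ)))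
    (ContinuousMap.continuous_of_continuous_uncurry _ (continuous_snd.sub continuous_fst))
    (fun t => measurePreserving_sub_right volume t) ENNReal.one_ne_top

end Translation

section ConvolutionAsIntegral

theorem comp_sub_convolution {𝕜 G E E' F : Type*} [NontriviallyNormedField 𝕜]
    [AddCommGroup G] [MeasurableSpace G] [MeasurableAdd G] {μ : Measure G}
    [μ.IsAddRightInvariant] [NormedAddCommGroup E] [NormedAddCommGroup E']
    [NormedAddCommGroup F] [NormedSpace 𝕜 E] [NormedSpace 𝕜 E'] [NormedSpace 𝕜 F]
    [NormedSpace ℝ F] (L : E →L[𝕜] E' →L[𝕜] F) (f : G → E) (g : G → E') (t : G) :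
    convolution (fun x => f (x - t)) g L μ = convolution f (fun x => g (x - t)) L μ := by
  funext x
  simp only [convolution_def]
  rw [← integral_add_right_eq_self _ t]
  simp only [add_sub_cancel_right, sub_sub]

theorem MeasureTheory.Integrable.smul_translateL1 {f : ℝ → ℂ} (hf : Integrable f)
    (G : ℝ →₁[volume] ℂ) : Integrable fun t => f t • translateL1 t G := by
  refine (hf.norm.mul_const ‖G‖).mono'
    (hf.aestronglyMeasurable.smul (continuous_translateL1 G).aestronglyMeasurable)
    (ae_of_all _ fun t => ?_)
  simp [norm_smul]

theorem toL1_convolution_eq_integral {f g : ℝ → ℂ} (hf : Integrable f) (hg : Integrable g) :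
    (hf.integrable_convolution _ hg).toL1 (f ⋆ g) = ∫ t, f t • translateL1 t (hg.toL1 g) := by
  set Φ : ℝ → ℝ →₁[volume] ℂ := fun t => f t • translateL1 t (hg.toL1 g)
  have hΦ : Integrable Φ := hf.smul_translateL1 _
  refine Lp.ext <| (Integrable.coeFn_toL1 _).trans <|
    ae_eq_of_forall_setIntegral_eq_of_sigmaFinite
      (fun s _ _ => (hf.integrable_convolution _ hg).integrableOn)
      (fun s _ _ => (L1.integrable_coeFn _).integrableOn) fun s _ _ => ?_
  let I : (ℝ →₁[volume] ℂ) →L[ℂ] ℂ :=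
    (L1.integralCLM' ℂ).comp (LpToLpRestrictCLM ℝ ℂ ℂ volume 1 s)
  have hI (F : ℝ →₁[volume] ℂ) : I F = ∫ x in s, F x := by
    rw [ContinuousLinearMap.comp_apply, ← L1.integral_eq', L1.integral_eq_integral]
    exact integral_congr_ae (LpToLpRestrictCLM_coeFn ℂ s F)
  have hFubini : Integrable (fun p : ℝ × ℝ => f p.2 * g (p.1 - p.2))
      ((volume.restrict s).prod volume) := by
    rw [Measure.restrict_prod_eq_prod_univ]
    exact (hf.convolution_integrand (ContinuousLinearMap.mul ℂ ℂ) hg).restrict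
  calc ∫ x in s, (f ⋆ g) x = ∫ t, f t * ∫ x in s, g (x - t) := by
        simp only [convolution_mul]
        rw [integral_integral_swap hFubini]
        simp only [integral_const_mul]
    _ = ∫ t, I (Φ t) := by
        congr 1
        ext t
        rw [map_smul, hI, smul_eq_mul, translateL1_toL1,
          integral_congr_ae (ae_restrict_of_ae (Integrable.coeFn_toL1 _))]
    _ = ∫ x in s, (∫ t, Φ t) x := by rw [I.integral_comp_comm hΦ, hI]

theorem map_toL1_convolution (K : (ℝ →₁[volume] ℂ) →L[ℂ] ℂ) {f g : ℝ → ℂ}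
    (hf : Integrable f) (hg : Integrable g) :
    K ((hf.integrable_convolution _ hg).toL1 (f ⋆ g)) =
      ∫ t, f t * K (translateL1 t (hg.toL1 g)) := by
  rw [toL1_convolution_eq_integral hf hg, ← K.integral_comp_comm (hf.smul_translateL1 _)]
  simp

end ConvolutionAsIntegral

section Characters

variable {χ : ℝ → ℂ}

theorem exists_hasDerivAt_mul_of_map_add (hc : Continuous χ) (h0 : χ 0 = 1)
    (hadd : ∀ s t, χ (s + t) = χ s * χ t) : ∃ w : ℂ, ∀ t, HasDerivAt χ (w * χ t) t := by
  set F : ℝ → ℂ := fun x => ∫ s in (0 : ℝ)..x, χ s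
  have hF (x : ℝ) : HasDerivAt F (χ x) x := (hc.integral_hasStrictDerivAt 0 x).hasDerivAt
  obtain ⟨δ, hδ⟩ : ∃ δ, F δ ≠ 0 := by
    by_contra! hF0
    have hconst : HasDerivAt F 0 0 := by
      rw [show F = fun _ => 0 from funext hF0]
      exact hasDerivAt_const _ _
    exact one_ne_zero (h0 ▸ (hF 0).unique hconst)
  have hshift (t : ℝ) : χ t * F δ = F (t + δ) - F t := by
    rw [← intervalIntegral.integral_const_mul]
    simp_rw [← hadd]
    rw [intervalIntegral.integral_comp_add_left (fun s => χ s) t, add_zero]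
    exact (intervalIntegral.integral_interval_sub_left (hc.intervalIntegrable _ _)
      (hc.intervalIntegrable _ _)).symm
  refine ⟨(χ δ - 1) / F δ, fun t => ?_⟩
  have hdiff : HasDerivAt (fun t => (F (t + δ) - F t) / F δ) ((χ (t + δ) - χ t) / F δ) t :=
    (((hF (t + δ)).comp_add_const t δ).sub (hF t)).div_const _
  convert hdiff using 1
  · funext s
    rw [← hshift, mul_div_cancel_right₀ _ hδ]
  · rw [hadd]
    ring

theorem eq_exp_of_hasDerivAt_mul {w : ℂ} (hd : ∀ t, HasDerivAt χ (w * χ t) t) (h0 : χ 0 = 1)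
    (t : ℝ) : χ t = exp (w * t) := by
  have hd' (s : ℝ) : HasDerivAt (fun s : ℝ => χ s * exp (-(w * s))) 0 s := by
    have hexp : HasDerivAt (fun s : ℝ => exp (-(w * s))) (exp (-(w * s)) * -w) s := by
      simpa using (((hasDerivAt_id (s : ℂ)).const_mul w).neg.comp_ofReal).cexp
    exact ((hd s).mul hexp).congr_deriv (by ring)
  have hconst := is_const_of_deriv_eq_zero (fun s => (hd' s).differentiableAt)
    (fun s => (hd' s).deriv) t 0
  simp only [h0, ofReal_zero, mul_zero, neg_zero, exp_zero, mul_one] at hconst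
  calc χ t = exp (w * t) * (χ t * exp (-(w * t))) := by
        rw [mul_left_comm, ← exp_add, add_neg_cancel, exp_zero, mul_one]
    _ = exp (w * t) := by rw [hconst, mul_one]

theorem re_eq_zero_of_norm_exp_le {w : ℂ} {M : ℝ} (hM : ∀ t : ℝ, ‖exp (w * t)‖ ≤ M) :
    w.re = 0 := by
  by_contra hw
  have hnorm := hM ((|M| + 1) / w.re)
  rw [norm_exp, mul_re, ofReal_re, ofReal_im, mul_zero, sub_zero,
    mul_div_cancel₀ _ hw] at hnorm
  linarith [Real.add_one_le_exp (|M| + 1), le_abs_self M]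

theorem exists_eq_exp_of_map_add (hc : Continuous χ) (h0 : χ 0 = 1)
    (hadd : ∀ s t, χ (s + t) = χ s * χ t) {M : ℝ} (hM : ∀ t, ‖χ t‖ ≤ M) :
    ∃ θ : ℝ, ∀ t, χ t = exp (↑(θ * t) * I) := by
  obtain ⟨w, hw⟩ := exists_hasDerivAt_mul_of_map_add hc h0 hadd
  have hχ := eq_exp_of_hasDerivAt_mul hw h0
  have hre : w.re = 0 := re_eq_zero_of_norm_exp_le fun t => hχ t ▸ hM t
  refine ⟨w.im, fun t => ?_⟩
  rw [hχ]
  congr 1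
  apply Complex.ext <;> simp [hre]

end Characters

section MultiplicativeFunctional

variable (K : (ℝ →₁[volume] ℂ) →L[ℂ] ℂ)

theorem map_translateL1_mul_comm
    (hmul : ∀ (f g : ℝ → ℂ) (hf : Integrable f) (hg : Integrable g),
      K ((hf.integrable_convolution _ hg).toL1 (f ⋆ g)) = K (hf.toL1 f) * K (hg.toL1 g))
    (t : ℝ) (F G : ℝ →₁[volume] ℂ) :
    K (translateL1 t F) * K G = K F * K (translateL1 t G) := by
  have key {f g : ℝ → ℂ} (hf : Integrable f) (hg : Integrable g) :
      K (translateL1 t (hf.toL1 f)) * K (hg.toL1 g) =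
        K (hf.toL1 f) * K (translateL1 t (hg.toL1 g)) := by
    rw [translateL1_toL1, translateL1_toL1, ← hmul, ← hmul]
    simp only [comp_sub_convolution]
  simpa only [Integrable.toL1_coeFn] using key (L1.integrable_coeFn F) (L1.integrable_coeFn G)

theorem exists_eq_integral_mul_exp_of_map_convolution
    (hmul : ∀ (f g : ℝ → ℂ) (hf : Integrable f) (hg : Integrable g),
      K ((hf.integrable_convolution _ hg).toL1 (f ⋆ g)) = K (hf.toL1 f) * K (hg.toL1 g))
    (hK : K ≠ 0) :
    ∃ θ : ℝ, ∀ (f : ℝ → ℂ) (hf : Integrable f),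
      K (hf.toL1 f) = ∫ t, f t * exp (↑(θ * t) * I) := by
  obtain ⟨u, hu, hU⟩ : ∃ (u : ℝ → ℂ) (hu : Integrable u volume), K (hu.toL1 u) ≠ 0 := by
    by_contra! h
    refine hK (ContinuousLinearMap.ext fun U => ?_)
    simpa only [Integrable.toL1_coeFn, zero_apply] using h U (L1.integrable_coeFn U)
  set U := hu.toL1 u
  set χ : ℝ → ℂ := fun t => K (translateL1 t U) / K U
  have hχ (t : ℝ) (F : ℝ →₁[volume] ℂ) : K (translateL1 t F) = χ t * K F := by
    rw [div_mul_eq_mul_div, map_translateL1_mul_comm K hmul t U F, mul_div_cancel_left₀ _ hU]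
  have hχ0 : χ 0 = 1 := by simp [χ, translateL1_zero, hU]
  have hχadd (s t : ℝ) : χ (s + t) = χ s * χ t := by
    rw [← mul_left_inj' hU, ← hχ, ← translateL1_translateL1, hχ, hχ]
    ring
  have hχcont : Continuous χ := (K.continuous.comp (continuous_translateL1 U)).div_const _
  have hχbdd (t : ℝ) : ‖χ t‖ ≤ ‖K‖ * ‖U‖ / ‖K U‖ := by
    rw [norm_div]
    gcongr
    simpa using K.le_opNorm (translateL1 t U)
  obtain ⟨θ, hθ⟩ := exists_eq_exp_of_map_add hχcont hχ0 hχadd hχbdd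
  refine ⟨θ, fun f hf => mul_right_cancel₀ hU ?_⟩
  calc K (hf.toL1 f) * K U = ∫ t, f t * K (translateL1 t U) := by
        rw [← hmul f u hf hu, map_toL1_convolution K hf hu]
    _ = (∫ t, f t * exp (↑(θ * t) * I)) * K U := by
        simp_rw [hχ, hθ, ← mul_assoc]
        exact integral_mul_const _ _

end MultiplicativeFunctional

section Chirp

theorem ofReal_sqrt_abs_ne_zero {b : ℝ} (hb : b ≠ 0) : (Real.sqrt |b| : ℂ) ≠ 0 := by
  exact_mod_cast (Real.sqrt_pos.2 (abs_pos.2 hb)).ne'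

noncomputable def chirp (a b x : ℝ) : ℂ :=
  exp (↑(Real.pi * a * x ^ 2 / b) * I)

theorem norm_chirp (a b x : ℝ) : ‖chirp a b x‖ = 1 :=
  norm_exp_ofReal_mul_I _

theorem continuous_chirp (a b : ℝ) : Continuous (chirp a b) := by
  unfold chirp
  fun_prop

theorem chirp_neg_mul_chirp (a b x : ℝ) : chirp (-a) b x * chirp a b x = 1 := by
  rw [chirp, chirp, ← exp_add, ← add_mul, ← ofReal_add,
    show Real.pi * -a * x ^ 2 / b + Real.pi * a * x ^ 2 / b = 0 by ring]
  simp

theorem chirp_neg_mul_convolution (a : ℝ) {b : ℝ} (hb : b ≠ 0) (φ ψ : ℝ → ℂ) (x : ℝ) :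
    chirp (-a) b x * (φ ⋆ ψ) x = Real.sqrt |b| *
      convA a b (fun y => chirp (-a) b y * φ y) (fun y => chirp (-a) b y * ψ y) x := by
  have hs := ofReal_sqrt_abs_ne_zero hb
  rw [convA, ← mul_assoc, mul_one_div_cancel hs, one_mul, convolution_mul,
    ← integral_const_mul]
  congr 1
  ext s
  have hsplit : chirp (-a) b x = chirp (-a) b s *
      exp (-2 * Real.pi * I * (a / b) * s * (x - s)) * chirp (-a) b (x - s) := by
    simp only [chirp, ← exp_add]
    congr 1
    push_cast
    ring
  rw [hsplit]
  ring

theorem map_chirp_neg_mul_convolution {a b : ℝ} (hb : b ≠ 0) {h : (ℝ → ℂ) → ℂ}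
    (hsmul : ∀ (z : ℂ) (f : ℝ → ℂ), Integrable f → h (z • f) = z * h f)
    (hmul : ∀ f g : ℝ → ℂ, Integrable f → Integrable g → h (convA a b f g) = h f * h g)
    {f g : ℝ → ℂ} (hf : Integrable f) (hg : Integrable g) :
    h (fun x => chirp (-a) b x * (f ⋆ g) x) =
      Real.sqrt |b| * (h (fun x => chirp (-a) b x * f x) * h (fun x => chirp (-a) b x * g x)) := by
  have hs := ofReal_sqrt_abs_ne_zero hb
  have hI {φ : ℝ → ℂ} (hφ : Integrable φ) : Integrable (fun x => chirp (-a) b x * φ x) :=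
    hφ.mul_of_norm_eq_one (continuous_chirp (-a) b).aestronglyMeasurable (norm_chirp (-a) b)
  have heq : (fun x => chirp (-a) b x * (f ⋆ g) x) = (Real.sqrt |b| : ℂ) •
      convA a b (fun y => chirp (-a) b y * f y) (fun y => chirp (-a) b y * g y) :=
    funext (chirp_neg_mul_convolution a hb f g)
  have hint : Integrable
      (convA a b (fun y => chirp (-a) b y * f y) (fun y => chirp (-a) b y * g y)) := by
    rw [← inv_smul_smul₀ hs (convA a b _ _), ← heq]
    exact (hI (hf.integrable_convolution _ hg)).smul _
  rw [heq, hsmul _ _ hint, hmul _ _ (hI hf) (hI hg)]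

theorem exists_L1_map_convolution_of_map_convA {a b : ℝ} (hb : b ≠ 0)
    {h : (ℝ → ℂ) → ℂ} {C : ℝ}
    (hadd : ∀ f g : ℝ → ℂ, Integrable f → Integrable g → h (f + g) = h f + h g)
    (hsmul : ∀ (z : ℂ) (f : ℝ → ℂ), Integrable f → h (z • f) = z * h f)
    (hC : ∀ f : ℝ → ℂ, Integrable f → ‖h f‖ ≤ C * (eLpNorm f 1 volume).toReal)
    (hmul : ∀ f g : ℝ → ℂ, Integrable f → Integrable g → h (convA a b f g) = h f * h g) :
    ∃ K : (ℝ →₁[volume] ℂ) →L[ℂ] ℂ,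
      (∀ (f : ℝ → ℂ) (hf : Integrable f),
        K (hf.toL1 f) = Real.sqrt |b| * h (fun x => chirp (-a) b x * f x)) ∧
      ∀ (f g : ℝ → ℂ) (hf : Integrable f) (hg : Integrable g),
        K ((hf.integrable_convolution _ hg).toL1 (f ⋆ g)) = K (hf.toL1 f) * K (hg.toL1 g) := by
  obtain ⟨K, hK⟩ := exists_continuousLinearMap_L1_eq_mul hadd hsmul hC
    (continuous_chirp (-a) b).aestronglyMeasurable (norm_chirp (-a) b)
  refine ⟨(Real.sqrt |b| : ℂ) • K, fun f hf => by simp [hK], fun f g hf hg => ?_⟩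
  simp only [smul_apply, hK, smul_eq_mul, map_chirp_neg_mul_convolution hb hsmul hmul hf hg]
  ring

theorem conj_etaA_mul_SAFT (a b d p q ω : ℝ) (f : ℝ → ℂ) :
    starRingEnd ℂ (etaA b d p q ω) * SAFT a b d p q f ω = (1 / Real.sqrt |b|) *
      ∫ t, chirp a b t * f t * exp (↑(2 * Real.pi * (p - ω) / b * t) * I) := by
  rw [SAFT, etaA, mul_left_comm, ← integral_const_mul, ← exp_conj]
  congr 2
  ext t
  calc _ = f t * (exp _ * exp _) := mul_left_comm _ _ _
    _ = f t * (chirp a b t * exp (↑(2 * Real.pi * (p - ω) / b * t) * I)) := by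
      rw [chirp, ← exp_add, ← exp_add]
      congr 2
      simp only [map_mul, map_div₀, map_add, map_sub, map_pow, map_ofNat, conj_ofReal, conj_I]
      push_cast
      ring
    _ = _ := by ring

end Chirp

theorem multiplicative_functional_SAFT_general (a b d p q : ℝ) (hb : b ≠ 0)
    (h : (ℝ → ℂ) → ℂ)
    (hadd : ∀ f g : ℝ → ℂ, Integrable f → Integrable g → h (f + g) = h f + h g)
    (hsmul : ∀ (z : ℂ) (f : ℝ → ℂ), Integrable f → h (z • f) = z * h f)
    (hcont : ∃ C : ℝ, ∀ f : ℝ → ℂ, Integrable f →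
      ‖h f‖ ≤ C * (eLpNorm f 1 volume).toReal)
    (hmul : ∀ f g : ℝ → ℂ, Integrable f → Integrable g →
      h (convA a b f g) = h f * h g)
    (hne : ∃ f : ℝ → ℂ, Integrable f ∧ h f ≠ 0) :
    ∃ ω₀ : ℝ, ∀ f : ℝ → ℂ, Integrable f →
      h f = (starRingEnd ℂ) (etaA b d p q ω₀) * SAFT a b d p q f ω₀ := by
  obtain ⟨C, hC⟩ := hcont
  obtain ⟨K, hK, hKmul⟩ := exists_L1_map_convolution_of_map_convA hb hadd hsmul hC hmul
  have hchirp {f : ℝ → ℂ} (hf : Integrable f) : Integrable (fun x => chirp a b x * f x) :=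
    hf.mul_of_norm_eq_one (continuous_chirp a b).aestronglyMeasurable (norm_chirp a b)
  have hKchirp {f : ℝ → ℂ} (hf : Integrable f) :
      K ((hchirp hf).toL1 _) = Real.sqrt |b| * h f := by
    simp only [hK, ← mul_assoc, chirp_neg_mul_chirp, one_mul]
  have hKne : K ≠ 0 := by
    obtain ⟨f₀, hf₀, hhf₀⟩ := hne
    intro hK0
    have hvanish := DFunLike.congr_fun hK0 ((hchirp hf₀).toL1 _)
    rw [hKchirp hf₀, zero_apply] at hvanish
    exact hhf₀ ((mul_eq_zero.1 hvanish).resolve_left (ofReal_sqrt_abs_ne_zero hb))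
  obtain ⟨θ, hθ⟩ := exists_eq_integral_mul_exp_of_map_convolution K hKmul hKne
  refine ⟨p - θ * b / (2 * Real.pi), fun f hf => ?_⟩
  rw [conj_etaA_mul_SAFT, show 2 * Real.pi * (p - (p - θ * b / (2 * Real.pi))) / b = θ by
    field_simp; ring, ← hθ _ (hchirp hf), hKchirp hf, one_div,
    inv_mul_cancel_left₀ (ofReal_sqrt_abs_ne_zero hb)]

/-- Every nonzero continuous multiplicative linear functional on `(L¹(ℝ), ⋆_A)` is of the form
`f ↦ conj (η_A ω₀) * 𝓕_A f (ω₀)` for some `ω₀ ∈ ℝ`. -/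
theorem multiplicative_functional_SAFT (a b c d p q : ℝ) (hb : b ≠ 0)
    (hA : a * d - b * c = 1) (h : (ℝ → ℂ) → ℂ)
    (hadd : ∀ f g : ℝ → ℂ, Integrable f → Integrable g → h (f + g) = h f + h g)
    (hsmul : ∀ (z : ℂ) (f : ℝ → ℂ), Integrable f → h (z • f) = z * h f)
    (hcont : ∃ C : ℝ, ∀ f : ℝ → ℂ, Integrable f →
      ‖h f‖ ≤ C * (eLpNorm f 1 volume).toReal)
    (hmul : ∀ f g : ℝ → ℂ, Integrable f → Integrable g →
      h (convA a b f g) = h f * h g)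
    (hne : ∃ f : ℝ → ℂ, Integrable f ∧ h f ≠ 0) :
    ∃ ω₀ : ℝ, ∀ f : ℝ → ℂ, Integrable f →
      h f = (starRingEnd ℂ) (etaA b d p q ω₀) * SAFT a b d p q f ω₀ :=
  multiplicative_functional_SAFT_general a b d p q hb h hadd hsmul hcont hmul hne
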